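/- Let R be a commutative ring and u, v ∈ R with u·(u+v) = 0 and v·(u+v) = 0. Let f ∈ R[X] be a polynomial with zero constant term. Then for every integer i ≥ 0, (f(u))^(i+1) = f(u) · (f(-v))^i. -/

import Mathlib

open Polynomial

theorem mul_pow_eq_mul_pow_of_mul_eq {M : Type*} [CommMonoid M] {a x y : M}
    (h : a * x = a * y) (n : ℕ) : a * x ^ n = a * y ^ n := by
  induction n with
  | zero => simp
  | succ n ih =>
    calc a * x ^ (n + 1) = a * x ^ n * x := by rw [pow_succ, mul_assoc]
      _ = a * x * y ^ n := by rw [ih, mul_right_comm]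
      _ = a * y ^ (n + 1) := by rw [h, pow_succ', mul_assoc]

theorem Polynomial.mul_eval_eq_mul_eval_of_mul_eq {R : Type*} [CommRing R] {a x y : R}
    (h : a * x = a * y) (p : R[X]) : a * p.eval x = a * p.eval y := by
  obtain ⟨c, hc⟩ := p.sub_dvd_eval_sub x y
  linear_combination a * hc + c * h

theorem Polynomial.eval_mul_eval_eq_of_mul_eq {R : Type*} [CommRing R] {x y : R}
    (h : x * x = x * y) {f : R[X]} (hf : f.coeff 0 = 0) :
    f.eval x * f.eval x = f.eval x * f.eval y := by
  have hfx : f.eval x = f.divX.eval x * x := by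
    conv_lhs => rw [← f.divX_mul_X_add, hf]
    simp
  calc f.eval x * f.eval x = f.divX.eval x * (x * f.eval x) := by rw [hfx]; ring
    _ = f.divX.eval x * (x * f.eval y) := by rw [mul_eval_eq_mul_eval_of_mul_eq h]
    _ = f.eval x * f.eval y := by rw [hfx]; ring

theorem stmt_1_general {R : Type*} [CommRing R] (u v : R)
    (hu : u * (u + v) = 0)
    (f : Polynomial R) (hf : f.coeff 0 = 0) (i : ℕ) :
    (f.eval u) ^ (i + 1) = f.eval u * (f.eval (-v)) ^ i := by
  have hu' : u * u = u * -v := by linear_combination hu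
  rw [pow_succ']
  exact mul_pow_eq_mul_pow_of_mul_eq (eval_mul_eval_eq_of_mul_eq hu' hf) i

theorem stmt_1 {R : Type*} [CommRing R] (u v : R)
    (hu : u * (u + v) = 0) (hv : v * (u + v) = 0)
    (f : Polynomial R) (hf : f.coeff 0 = 0) (i : ℕ) :
    (f.eval u) ^ (i + 1) = f.eval u * (f.eval (-v)) ^ i :=
  stmt_1_general u v hu f hf i
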